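/- arXiv:1810.10370 — 2 statements merged into one kernel-verified Lean document; each statement's English description precedes it below -/
import Mathlib

section
/- Assume (H1), (H2), (H3), let μ > 0 and ε > 0 satisfy εγ₂ < μ and γ₁ > μ, let a : ℝ → ℝⁿ, b : ℝ → ℝᵐ be Borel measurable, fix v̄₀ ∈ ℝᵐ, and let I = (I₁, I₂) be the map on C⁻_{μ/ε}(ℝⁿ×ℝᵐ) given by I₁(û,v̂)(t) = ∫_{−∞}^t e^{(A/ε)(t−r)} ε^{−1} U(û_r + a(r), v̂_r + b(r)) dr and I₂(û,v̂)(t) = e^{Bt}v̄₀ − ∫_t^0 e^{B(t−r)} V(û_r + a(r), v̂_r + b(r)) dr for t ≤ 0. Then for all ẑ¹, ẑ² ∈ C⁻_{μ/ε}(ℝⁿ×ℝᵐ) one has sup_{t≤0} e^{(μ/ε)t}|I(ẑ¹)(t) − I(ẑ²)(t)| ≤ (L/(γ₁−μ) + εL/(μ−εγ₂)) · sup_{t≤0} e^{(μ/ε)t}|ẑ¹_t − ẑ²_t|. -/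
open scoped RealInnerProductSpace
open MeasureTheory Set

/-!
By (H3), the integrands of `I(ẑ¹)` and `I(ẑ²)` at time `r ≤ 0` differ by the propagator applied
to a vector of norm at most `L K e^{-(μ/ε) r}`. Dissipativity (H1) makes `e^{sA}` contract at rate
`γ₁` (Lyapunov function `e^{2γ₁ s}|e^{sA}x|²`), so the fast component is bounded by
`∫_{-∞}^t e^{-γ₁ (t-r)/ε} ε⁻¹ L K e^{-μ r/ε} dr = L K e^{-μ t/ε} / (γ₁ - μ)`,
while (H2) for negative times bounds the slow one by
`∫_t^∞ e^{γ₂ (r-t)} L K e^{-μ r/ε} dr = ε L K e^{-μ t/ε} / (μ - ε γ₂)`.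
-/

theorem norm_exp_smul_apply_le_of_inner_le {E : Type*} [NormedAddCommGroup E]
    [InnerProductSpace ℝ E] [CompleteSpace E] {A : E →L[ℝ] E} {γ : ℝ}
    (hA : ∀ x, ⟪A x, x⟫ ≤ -γ * ‖x‖ ^ 2) (x : E) {s : ℝ} (hs : 0 ≤ s) :
    ‖NormedSpace.exp (s • A) x‖ ≤ Real.exp (-γ * s) * ‖x‖ := by
  set y : ℝ → E := fun s => NormedSpace.exp (s • A) x
  have hy : ∀ s, HasDerivAt y (A (y s)) s := fun s => by
    simpa [y] using (hasDerivAt_exp_smul_const' (𝕂 := ℝ) A s).clm_apply (hasDerivAt_const s x)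
  -- Lyapunov function: its derivative `2 e^{2γs} (γ ‖y s‖² + ⟪A (y s), y s⟫)` is `≤ 0` by `hA`
  have hlyap : Antitone fun s => Real.exp (2 * γ * s) * ‖y s‖ ^ 2 := by
    refine antitone_of_hasDerivAt_nonpos
      (f' := fun s => 2 * γ * Real.exp (2 * γ * s) * ‖y s‖ ^ 2 +
        Real.exp (2 * γ * s) * (2 * ⟪y s, A (y s)⟫)) (fun s => ?_) (fun s => ?_)
    · exact (((hasDerivAt_id' s).const_mul (2 * γ)).exp.mul (hy s).norm_sq).congr_deriv
        (by ring)
    · have := mul_le_mul_of_nonneg_left (hA (y s)) (Real.exp_pos (2 * γ * s)).le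
      rw [real_inner_comm] at this
      simp only [Pi.zero_apply]
      nlinarith
  have hy0 : y 0 = x := by simp [y]
  have key : Real.exp (2 * γ * s) * ‖y s‖ ^ 2 ≤ ‖x‖ ^ 2 := by
    simpa [hy0] using hlyap hs
  rw [← sq_le_sq₀ (norm_nonneg _) (by positivity)]
  calc ‖y s‖ ^ 2 = Real.exp (-γ * s) ^ 2 * (Real.exp (2 * γ * s) * ‖y s‖ ^ 2) := by
        rw [← mul_assoc, ← Real.exp_nat_mul, ← Real.exp_add]; ring_nf; simp
    _ ≤ (Real.exp (-γ * s) * ‖x‖) ^ 2 := by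
        rw [mul_pow]; exact mul_le_mul_of_nonneg_left key (by positivity)

theorem lipschitzWith_of_norm_sub_le_mul_add {E F G : Type*} [SeminormedAddCommGroup E]
    [SeminormedAddCommGroup F] [SeminormedAddCommGroup G] {U : E × F → G} {L : ℝ} (hL : 0 ≤ L)
    (hU : ∀ x₁ y₁ x₂ y₂, ‖U (x₁, y₁) - U (x₂, y₂)‖ ≤ L * (‖x₁ - x₂‖ + ‖y₁ - y₂‖)) :
    LipschitzWith (2 * L).toNNReal U := by
  refine LipschitzWith.of_dist_le' fun p q => ?_
  have h₁ : ‖p.1 - q.1‖ ≤ dist p q := by rw [dist_eq_norm]; exact norm_fst_le (p - q)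
  have h₂ : ‖p.2 - q.2‖ ≤ dist p q := by rw [dist_eq_norm]; exact norm_snd_le (p - q)
  calc dist (U p) (U q) ≤ L * (‖p.1 - q.1‖ + ‖p.2 - q.2‖) := by
        rw [dist_eq_norm]; exact hU p.1 p.2 q.1 q.2
    _ ≤ 2 * L * dist p q := by nlinarith

theorem norm_integral_sub_integral_le {α E : Type*} [MeasurableSpace α] [NormedAddCommGroup E]
    [NormedSpace ℝ E] {μ : Measure α} {f g : α → E} {b : α → ℝ}
    (hf : AEStronglyMeasurable f μ) (hg : AEStronglyMeasurable g μ) (hb : Integrable b μ)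
    (hfg : ∀ᵐ x ∂μ, ‖f x - g x‖ ≤ b x) :
    ‖∫ x, f x ∂μ - ∫ x, g x ∂μ‖ ≤ ∫ x, b x ∂μ := by
  have hsub : Integrable (f - g) μ := hb.mono' (hf.sub hg) hfg
  by_cases hfi : Integrable f μ
  · have hgi : Integrable g μ := by simpa using hfi.sub hsub
    rw [← integral_sub hfi hgi]
    exact norm_integral_le_of_norm_le hb hfg
  -- junk case: both Bochner integrals vanish
  · have hgi : ¬Integrable g μ := fun hgi => hfi (by simpa using hgi.add hsub)
    rw [integral_undef hfi, integral_undef hgi, sub_zero, norm_zero]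
    exact integral_nonneg_of_ae (hfg.mono fun x hx => (norm_nonneg _).trans hx)

theorem MeasureTheory.AEStronglyMeasurable.exp_smul_apply {E : Type*} [NormedAddCommGroup E]
    [NormedSpace ℝ E] [CompleteSpace E] {μ : Measure ℝ} {w : ℝ → E}
    (hw : AEStronglyMeasurable w μ) {φ : ℝ → ℝ} (hφ : Continuous φ) (A : E →L[ℝ] E) :
    AEStronglyMeasurable (fun r => NormedSpace.exp (φ r • A) (w r)) μ :=
  Continuous.comp_aestronglyMeasurable₂ (g := fun (T : E →L[ℝ] E) x => T x) (by fun_prop)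
    ((differentiable_exp_smul_const ℝ A).continuous.comp hφ).aestronglyMeasurable hw

theorem Continuous.aestronglyMeasurable_comp_add_prodMk {E F G : Type*} [NormedAddCommGroup E]
    [NormedAddCommGroup F] [TopologicalSpace G] [MeasurableSpace E] [BorelSpace E]
    [SecondCountableTopology E] [MeasurableSpace F] [BorelSpace F] [SecondCountableTopology F]
    {U : E × F → G} (hU : Continuous U) {s : Set ℝ} (hs : MeasurableSet s)
    {u a : ℝ → E} {v b : ℝ → F} (hu : ContinuousOn u s) (hv : ContinuousOn v s)
    (ha : Measurable a) (hb : Measurable b) :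
    AEStronglyMeasurable (fun r => U (u r + a r, v r + b r)) (volume.restrict s) :=
  hU.comp_aestronglyMeasurable
    (((hu.aestronglyMeasurable hs).add ha.aestronglyMeasurable).prodMk
      ((hv.aestronglyMeasurable hs).add hb.aestronglyMeasurable))

theorem norm_map_add_sub_map_add_le_mul_exp {E F G : Type*} [SeminormedAddCommGroup E]
    [SeminormedAddCommGroup F] [SeminormedAddCommGroup G] {U : E × F → G} {L : ℝ} (hL : 0 ≤ L)
    (hU : ∀ x₁ y₁ x₂ y₂, ‖U (x₁, y₁) - U (x₂, y₂)‖ ≤ L * (‖x₁ - x₂‖ + ‖y₁ - y₂‖))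
    {x₁ x₂ a : E} {y₁ y₂ b : F} {c r K : ℝ}
    (hK : Real.exp (c * r) * (‖x₁ - x₂‖ + ‖y₁ - y₂‖) ≤ K) :
    ‖U (x₁ + a, y₁ + b) - U (x₂ + a, y₂ + b)‖ ≤ L * K * Real.exp (-(c * r)) := by
  have hdist : ‖x₁ - x₂‖ + ‖y₁ - y₂‖ ≤ K * Real.exp (-(c * r)) := by
    rw [Real.exp_neg, ← div_eq_mul_inv, le_div_iff₀ (Real.exp_pos _), mul_comm]
    exact hK
  calc _ ≤ L * (‖x₁ - x₂‖ + ‖y₁ - y₂‖) := by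
        simpa only [add_sub_add_right_eq_sub] using hU (x₁ + a) (y₁ + b) (x₂ + a) (y₂ + b)
    _ ≤ L * K * Real.exp (-(c * r)) := by
        rw [mul_assoc]; exact mul_le_mul_of_nonneg_left hdist hL

theorem norm_integral_Iic_exp_smul_sub_le {E : Type*} [NormedAddCommGroup E]
    [InnerProductSpace ℝ E] [CompleteSpace E] {A : E →L[ℝ] E} {γ μ ε M t : ℝ}
    (hA : ∀ x, ⟪A x, x⟫ ≤ -γ * ‖x‖ ^ 2) (hμγ : μ < γ) (hε : 0 < ε) (ht : t ≤ 0)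
    {w₁ w₂ : ℝ → E} (hw₁ : AEStronglyMeasurable w₁ (volume.restrict (Iic 0)))
    (hw₂ : AEStronglyMeasurable w₂ (volume.restrict (Iic 0)))
    (hw : ∀ r ≤ 0, ‖w₁ r - w₂ r‖ ≤ M * Real.exp (-(μ / ε * r))) :
    Real.exp (μ / ε * t) *
        ‖(∫ r in Iic t, NormedSpace.exp (((t - r) / ε) • A) (ε⁻¹ • w₁ r)) -
          ∫ r in Iic t, NormedSpace.exp (((t - r) / ε) • A) (ε⁻¹ • w₂ r)‖ ≤
      M / (γ - μ) := by
  have hc : 0 < (γ - μ) / ε := div_pos (sub_pos.2 hμγ) hε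
  set b : ℝ → ℝ := fun r => M / ε * Real.exp (-(γ / ε * t)) * Real.exp ((γ - μ) / ε * r)
  have hpt : ∀ r ≤ t, ‖NormedSpace.exp (((t - r) / ε) • A) (ε⁻¹ • w₁ r) -
      NormedSpace.exp (((t - r) / ε) • A) (ε⁻¹ • w₂ r)‖ ≤ b r := by
    intro r hr
    rw [← map_sub, ← smul_sub]
    calc _ ≤ Real.exp (-γ * ((t - r) / ε)) * ‖ε⁻¹ • (w₁ r - w₂ r)‖ :=
          norm_exp_smul_apply_le_of_inner_le hA _ (div_nonneg (sub_nonneg.2 hr) hε.le)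
      _ ≤ Real.exp (-γ * ((t - r) / ε)) * (ε⁻¹ * (M * Real.exp (-(μ / ε * r)))) := by
          rw [norm_smul, Real.norm_of_nonneg (inv_nonneg.2 hε.le)]
          gcongr
          exact hw r (hr.trans ht)
      _ = b r := by
          have hexp : Real.exp (-γ * ((t - r) / ε)) * Real.exp (-(μ / ε * r)) =
              Real.exp (-(γ / ε * t)) * Real.exp ((γ - μ) / ε * r) := by
            rw [← Real.exp_add, ← Real.exp_add]; ring_nf
          simp only [b]
          linear_combination (ε⁻¹ * M) * hexp
  have hmeas : ∀ w : ℝ → E, AEStronglyMeasurable w (volume.restrict (Iic 0)) →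
      AEStronglyMeasurable (fun r => NormedSpace.exp (((t - r) / ε) • A) (ε⁻¹ • w r))
        (volume.restrict (Iic t)) := fun w hw =>
    ((hw.mono_measure (Measure.restrict_mono (Iic_subset_Iic.2 ht) le_rfl)).const_smul ε⁻¹
      ).exp_smul_apply (by fun_prop) A
  have hint : ∫ r in Iic t, b r = M / ε * Real.exp (-(γ / ε * t)) *
      (Real.exp ((γ - μ) / ε * t) / ((γ - μ) / ε)) := by
    rw [integral_const_mul, integral_exp_mul_Iic hc]
  calc _ ≤ Real.exp (μ / ε * t) * ∫ r in Iic t, b r := by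
        gcongr
        exact norm_integral_sub_integral_le (hmeas w₁ hw₁) (hmeas w₂ hw₂)
          ((integrableOn_exp_mul_Iic hc t).const_mul _)
          ((ae_restrict_iff' measurableSet_Iic).2 (ae_of_all _ hpt))
    _ = M / (γ - μ) := by
        have hexp : Real.exp (μ / ε * t) * Real.exp (-(γ / ε * t)) *
            Real.exp ((γ - μ) / ε * t) = 1 := by
          rw [← Real.exp_add, ← Real.exp_add, ← Real.exp_zero]; ring_nf
        rw [hint]
        calc _ = Real.exp (μ / ε * t) * Real.exp (-(γ / ε * t)) * Real.exp ((γ - μ) / ε * t) *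
              (M / ε / ((γ - μ) / ε)) := by ring
          _ = M / (γ - μ) := by rw [hexp, one_mul]; field_simp

theorem norm_intervalIntegral_exp_smul_sub_le {F : Type*} [NormedAddCommGroup F]
    [NormedSpace ℝ F] [CompleteSpace F] {B : F →L[ℝ] F} {γ κ M t : ℝ}
    (hB : ∀ s ≤ 0, ‖NormedSpace.exp (s • B)‖ ≤ Real.exp (-γ * s)) (hγκ : γ < κ) (ht : t ≤ 0)
    {w₁ w₂ : ℝ → F} (hw₁ : AEStronglyMeasurable w₁ (volume.restrict (Iic 0)))
    (hw₂ : AEStronglyMeasurable w₂ (volume.restrict (Iic 0)))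
    (hw : ∀ r ≤ 0, ‖w₁ r - w₂ r‖ ≤ M * Real.exp (-(κ * r))) :
    Real.exp (κ * t) *
        ‖(∫ r in t..0, NormedSpace.exp ((t - r) • B) (w₁ r)) -
          ∫ r in t..0, NormedSpace.exp ((t - r) • B) (w₂ r)‖ ≤
      M / (κ - γ) := by
  have hc : γ - κ < 0 := sub_neg.2 hγκ
  have hM : 0 ≤ M := by simpa using (norm_nonneg _).trans (hw 0 le_rfl)
  set b : ℝ → ℝ := fun r => M * Real.exp (-γ * t) * Real.exp ((γ - κ) * r)
  have hpt : ∀ r ∈ Ioc t 0, ‖NormedSpace.exp ((t - r) • B) (w₁ r) -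
      NormedSpace.exp ((t - r) • B) (w₂ r)‖ ≤ b r := by
    intro r hr
    rw [← map_sub]
    calc _ ≤ ‖NormedSpace.exp ((t - r) • B)‖ * ‖w₁ r - w₂ r‖ := ContinuousLinearMap.le_opNorm _ _
      _ ≤ Real.exp (-γ * (t - r)) * (M * Real.exp (-(κ * r))) := by
          gcongr
          exacts [hB _ (by linarith [hr.1]), hw r hr.2]
      _ = b r := by
          have hexp : Real.exp (-γ * (t - r)) * Real.exp (-(κ * r)) =
              Real.exp (-γ * t) * Real.exp ((γ - κ) * r) := by
            rw [← Real.exp_add, ← Real.exp_add]; ring_nf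
          simp only [b]
          linear_combination M * hexp
  have hmeas : ∀ w : ℝ → F, AEStronglyMeasurable w (volume.restrict (Iic 0)) →
      AEStronglyMeasurable (fun r => NormedSpace.exp ((t - r) • B) (w r))
        (volume.restrict (Ioc t 0)) := fun w hw =>
    (hw.mono_measure (Measure.restrict_mono Ioc_subset_Iic_self le_rfl)).exp_smul_apply
      (by fun_prop) B
  have hbint : IntegrableOn b (Ioi t) := (integrableOn_exp_mul_Ioi hc t).const_mul _
  have hint : ∫ r in Ioi t, b r = M * Real.exp (-γ * t) * (Real.exp ((γ - κ) * t) / (κ - γ)) := by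
    rw [integral_const_mul, integral_exp_mul_Ioi hc, neg_div, ← div_neg, neg_sub]
  rw [intervalIntegral.integral_of_le ht, intervalIntegral.integral_of_le ht]
  calc _ ≤ Real.exp (κ * t) * ∫ r in Ioc t 0, b r := by
        gcongr
        exact norm_integral_sub_integral_le (hmeas w₁ hw₁) (hmeas w₂ hw₂)
          (hbint.mono_set Ioc_subset_Ioi_self)
          ((ae_restrict_iff' measurableSet_Ioc).2 (ae_of_all _ hpt))
    _ ≤ Real.exp (κ * t) * ∫ r in Ioi t, b r :=
        mul_le_mul_of_nonneg_left (setIntegral_mono_set hbint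
          (ae_of_all _ fun r => by positivity) Ioc_subset_Ioi_self.eventuallyLE) (by positivity)
    _ = M / (κ - γ) := by
        have hexp : Real.exp (κ * t) * Real.exp (-γ * t) * Real.exp ((γ - κ) * t) = 1 := by
          rw [← Real.exp_add, ← Real.exp_add, ← Real.exp_zero]; ring_nf
        rw [hint]
        calc _ = Real.exp (κ * t) * Real.exp (-γ * t) * Real.exp ((γ - κ) * t) *
              (M / (κ - γ)) := by ring
          _ = M / (κ - γ) := by rw [hexp, one_mul]

theorem star_operator_contraction_general (n m : ℕ)
    (γ₁ γ₂ L μ ε : ℝ)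
    (A : EuclideanSpace ℝ (Fin n) →L[ℝ] EuclideanSpace ℝ (Fin n))
    (B : EuclideanSpace ℝ (Fin m) →L[ℝ] EuclideanSpace ℝ (Fin m))
    (U : EuclideanSpace ℝ (Fin n) × EuclideanSpace ℝ (Fin m) → EuclideanSpace ℝ (Fin n))
    (V : EuclideanSpace ℝ (Fin n) × EuclideanSpace ℝ (Fin m) → EuclideanSpace ℝ (Fin m))
    -- (H1)
    (hA : ∀ x : EuclideanSpace ℝ (Fin n), ⟪A x, x⟫ ≤ -γ₁ * ‖x‖ ^ 2)
    -- (H2)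
    (hB₁ : ∀ t : ℝ, t ≤ 0 → ‖NormedSpace.exp (t • B)‖ ≤ Real.exp (-γ₂ * t))
    -- (H3)
    (hL : 0 < L)
    (hU : ∀ x₁ y₁ x₂ y₂, ‖U (x₁, y₁) - U (x₂, y₂)‖ ≤ L * (‖x₁ - x₂‖ + ‖y₁ - y₂‖))
    (hV : ∀ x₁ y₁ x₂ y₂, ‖V (x₁, y₁) - V (x₂, y₂)‖ ≤ L * (‖x₁ - x₂‖ + ‖y₁ - y₂‖))
    -- scales
    (hε : 0 < ε) (hεμ : ε * γ₂ < μ) (hμγ₁ : μ < γ₁)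
    -- input paths
    (a : ℝ → EuclideanSpace ℝ (Fin n)) (b : ℝ → EuclideanSpace ℝ (Fin m))
    (ha : Measurable a) (hb : Measurable b)
    -- anchor and two elements ẑ¹ = (u₁, v₁) and ẑ² = (u₂, v₂) of C⁻_{μ/ε}(ℝⁿ × ℝᵐ)
    (v₀ : EuclideanSpace ℝ (Fin m))
    (u₁ u₂ : ℝ → EuclideanSpace ℝ (Fin n)) (v₁ v₂ : ℝ → EuclideanSpace ℝ (Fin m))
    (hc₁ : ContinuousOn u₁ (Set.Iic 0)) (hc₂ : ContinuousOn v₁ (Set.Iic 0))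
    (hc₃ : ContinuousOn u₂ (Set.Iic 0)) (hc₄ : ContinuousOn v₂ (Set.Iic 0)) :
    ∀ K : ℝ,
      (∀ t : ℝ, t ≤ 0 → Real.exp (μ / ε * t) * (‖u₁ t - u₂ t‖ + ‖v₁ t - v₂ t‖) ≤ K) →
      ∀ t : ℝ, t ≤ 0 →
        Real.exp (μ / ε * t) *
          (‖(∫ r in Set.Iic t,
                NormedSpace.exp (((t - r) / ε) • A) (ε⁻¹ • U (u₁ r + a r, v₁ r + b r))) -
              ∫ r in Set.Iic t,
                NormedSpace.exp (((t - r) / ε) • A) (ε⁻¹ • U (u₂ r + a r, v₂ r + b r))‖ +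
          ‖(NormedSpace.exp (t • B) v₀ -
                ∫ r in t..0, NormedSpace.exp ((t - r) • B) (V (u₁ r + a r, v₁ r + b r))) -
              (NormedSpace.exp (t • B) v₀ -
                ∫ r in t..0, NormedSpace.exp ((t - r) • B) (V (u₂ r + a r, v₂ r + b r)))‖)
        ≤ (L / (γ₁ - μ) + ε * L / (μ - ε * γ₂)) * K := by
  intro K hK t ht
  have hUc := (lipschitzWith_of_norm_sub_le_mul_add hL.le hU).continuous
  have hVc := (lipschitzWith_of_norm_sub_le_mul_add hL.le hV).continuous
  have hfast := norm_integral_Iic_exp_smul_sub_le hA hμγ₁ hε ht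
    (hUc.aestronglyMeasurable_comp_add_prodMk measurableSet_Iic hc₁ hc₂ ha hb)
    (hUc.aestronglyMeasurable_comp_add_prodMk measurableSet_Iic hc₃ hc₄ ha hb)
    (fun r hr => norm_map_add_sub_map_add_le_mul_exp hL.le hU (hK r hr))
  have hslow := norm_intervalIntegral_exp_smul_sub_le hB₁ ((lt_div_iff₀' hε).2 hεμ) ht
    (hVc.aestronglyMeasurable_comp_add_prodMk measurableSet_Iic hc₁ hc₂ ha hb)
    (hVc.aestronglyMeasurable_comp_add_prodMk measurableSet_Iic hc₃ hc₄ ha hb)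
    (fun r hr => norm_map_add_sub_map_add_le_mul_exp hL.le hV (hK r hr))
  rw [norm_sub_rev] at hslow
  rw [sub_sub_sub_cancel_left, mul_add]
  calc _ ≤ L * K / (γ₁ - μ) + L * K / (μ / ε - γ₂) := add_le_add hfast hslow
    _ = (L / (γ₁ - μ) + ε * L / (μ - ε * γ₂)) * K := by
        rw [div_sub' hε.ne', div_div_eq_mul_div]
        ring

/-- Under (H1)–(H3), with `ε γ₂ < μ` and `γ₁ > μ`, the operator
`I = (I₁, I₂)` of the integral system (★) is Lipschitz on `C⁻_{μ/ε}(ℝⁿ × ℝᵐ)` with constant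
`L/(γ₁ - μ) + ε L/(μ - ε γ₂)`:
`sup_{t ≤ 0} e^{(μ/ε) t} |I(ẑ¹)(t) - I(ẑ²)(t)| ≤ (L/(γ₁-μ) + εL/(μ-εγ₂)) · sup_{t ≤ 0} e^{(μ/ε) t} |ẑ¹_t - ẑ²_t|`
(formulated via upper bounds `K` of the weighted distance, with `|(x,y)| = |x| + |y|`). -/
theorem star_operator_contraction (n m : ℕ)
    (γ₁ γ₂ γ₃ L μ ε : ℝ)
    (A : EuclideanSpace ℝ (Fin n) →L[ℝ] EuclideanSpace ℝ (Fin n))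
    (B : EuclideanSpace ℝ (Fin m) →L[ℝ] EuclideanSpace ℝ (Fin m))
    (U : EuclideanSpace ℝ (Fin n) × EuclideanSpace ℝ (Fin m) → EuclideanSpace ℝ (Fin n))
    (V : EuclideanSpace ℝ (Fin n) × EuclideanSpace ℝ (Fin m) → EuclideanSpace ℝ (Fin m))
    -- (H1)
    (hγ₁ : 0 < γ₁)
    (hA : ∀ x : EuclideanSpace ℝ (Fin n), ⟪A x, x⟫ ≤ -γ₁ * ‖x‖ ^ 2)
    -- (H2)
    (hγ₂ : 0 < γ₂) (hγ₃ : 0 < γ₃)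
    (hB₁ : ∀ t : ℝ, t ≤ 0 → ‖NormedSpace.exp (t • B)‖ ≤ Real.exp (-γ₂ * t))
    (hB₂ : ∀ t : ℝ, 0 < t → ‖NormedSpace.exp (t • B)‖ ≤ Real.exp (-γ₃ * t))
    -- (H3)
    (hL : 0 < L)
    (hU : ∀ x₁ y₁ x₂ y₂, ‖U (x₁, y₁) - U (x₂, y₂)‖ ≤ L * (‖x₁ - x₂‖ + ‖y₁ - y₂‖))
    (hV : ∀ x₁ y₁ x₂ y₂, ‖V (x₁, y₁) - V (x₂, y₂)‖ ≤ L * (‖x₁ - x₂‖ + ‖y₁ - y₂‖))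
    -- scales
    (hμ : 0 < μ) (hε : 0 < ε) (hεμ : ε * γ₂ < μ) (hμγ₁ : μ < γ₁)
    -- input paths
    (a : ℝ → EuclideanSpace ℝ (Fin n)) (b : ℝ → EuclideanSpace ℝ (Fin m))
    (ha : Measurable a) (hb : Measurable b)
    -- anchor and two elements ẑ¹ = (u₁, v₁) and ẑ² = (u₂, v₂) of C⁻_{μ/ε}(ℝⁿ × ℝᵐ)
    (v₀ : EuclideanSpace ℝ (Fin m))
    (u₁ u₂ : ℝ → EuclideanSpace ℝ (Fin n)) (v₁ v₂ : ℝ → EuclideanSpace ℝ (Fin m))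
    (hc₁ : ContinuousOn u₁ (Set.Iic 0)) (hc₂ : ContinuousOn v₁ (Set.Iic 0))
    (hc₃ : ContinuousOn u₂ (Set.Iic 0)) (hc₄ : ContinuousOn v₂ (Set.Iic 0))
    (hbd₁ : ∃ K : ℝ, ∀ t : ℝ, t ≤ 0 → Real.exp (μ / ε * t) * (‖u₁ t‖ + ‖v₁ t‖) ≤ K)
    (hbd₂ : ∃ K : ℝ, ∀ t : ℝ, t ≤ 0 → Real.exp (μ / ε * t) * (‖u₂ t‖ + ‖v₂ t‖) ≤ K) :
    ∀ K : ℝ,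
      (∀ t : ℝ, t ≤ 0 → Real.exp (μ / ε * t) * (‖u₁ t - u₂ t‖ + ‖v₁ t - v₂ t‖) ≤ K) →
      ∀ t : ℝ, t ≤ 0 →
        Real.exp (μ / ε * t) *
          (‖(∫ r in Set.Iic t,
                NormedSpace.exp (((t - r) / ε) • A) (ε⁻¹ • U (u₁ r + a r, v₁ r + b r))) -
              ∫ r in Set.Iic t,
                NormedSpace.exp (((t - r) / ε) • A) (ε⁻¹ • U (u₂ r + a r, v₂ r + b r))‖ +
          ‖(NormedSpace.exp (t • B) v₀ -
                ∫ r in t..0, NormedSpace.exp ((t - r) • B) (V (u₁ r + a r, v₁ r + b r))) -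
              (NormedSpace.exp (t • B) v₀ -
                ∫ r in t..0, NormedSpace.exp ((t - r) • B) (V (u₂ r + a r, v₂ r + b r)))‖)
        ≤ (L / (γ₁ - μ) + ε * L / (μ - ε * γ₂)) * K :=
  star_operator_contraction_general n m γ₁ γ₂ L μ ε A B U V hA hB₁ hL hU hV hε hεμ hμγ₁ a b ha hb v₀
    u₁ u₂ v₁ v₂ hc₁ hc₂ hc₃ hc₄
end

section
/- Assume (H1)–(H3) and (H5), let μ > 0 with εγ₂ < μ < γ₁, let a : ℝ → ℝⁿ, b : ℝ → ℝᵐ be Borel measurable, fix v̄₀ ∈ ℝᵐ, and let (û, v̂) ∈ C⁻_{μ/ε}(ℝⁿ×ℝᵐ) solve the integral system (★) with input paths a, b and anchor v̄₀. Then for every s ≤ 0, the shifted functions t ↦ (û_{t+s}, v̂_{t+s}), t ≤ 0, belong to C⁻_{μ/ε}(ℝⁿ×ℝᵐ) and solve the integral system (★) with the shifted input paths a(· + s), b(· + s) and anchor v̂_s. -/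
/-!
Shifting time by `s ≤ 0` maps a solution of (★) to a solution with shifted inputs. For `û` this
is translation invariance of Lebesgue measure on `(-∞, t]`. For `v̂` it is the cocycle identity of
the variation-of-constants formula: by the semigroup law `e^{(t+s)B} = e^{tB} e^{sB}`, the formula
at time `t + s` started from `w` at time `0` equals the formula on `[t + s, s]` started from `v̂_s`
at time `s`, once `∫_{t+s}^0` is split at `s`.
-/

open scoped RealInnerProductSpace
open MeasureTheory

/-- `(û, v̂)` solves the integral system (★) on `(-∞, 0]` with input paths `a, b` and anchor `w`,
as an element of the weighted space `C⁻_{μ/ε}(ℝⁿ × ℝᵐ)` (continuity on `(-∞,0]` together with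
finiteness of the weighted sup-norm `sup_{t ≤ 0} e^{(μ/ε) t} (‖û_t‖ + ‖v̂_t‖)`). -/
def IsStarSolution (n m : ℕ) (ε μ : ℝ)
    (A : EuclideanSpace ℝ (Fin n) →L[ℝ] EuclideanSpace ℝ (Fin n))
    (B : EuclideanSpace ℝ (Fin m) →L[ℝ] EuclideanSpace ℝ (Fin m))
    (U : EuclideanSpace ℝ (Fin n) × EuclideanSpace ℝ (Fin m) → EuclideanSpace ℝ (Fin n))
    (V : EuclideanSpace ℝ (Fin n) × EuclideanSpace ℝ (Fin m) → EuclideanSpace ℝ (Fin m))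
    (a : ℝ → EuclideanSpace ℝ (Fin n)) (b : ℝ → EuclideanSpace ℝ (Fin m))
    (w : EuclideanSpace ℝ (Fin m))
    (uh : ℝ → EuclideanSpace ℝ (Fin n)) (vh : ℝ → EuclideanSpace ℝ (Fin m)) : Prop :=
  ContinuousOn uh (Set.Iic 0) ∧ ContinuousOn vh (Set.Iic 0) ∧
  (∃ K : ℝ, ∀ t : ℝ, t ≤ 0 → Real.exp (μ / ε * t) * (‖uh t‖ + ‖vh t‖) ≤ K) ∧
  (∀ t : ℝ, t ≤ 0 →
    uh t = ∫ r in Set.Iic t,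
      NormedSpace.exp (((t - r) / ε) • A) (ε⁻¹ • U (uh r + a r, vh r + b r))) ∧
  (∀ t : ℝ, t ≤ 0 →
    vh t = NormedSpace.exp (t • B) w -
      ∫ r in t..0, NormedSpace.exp ((t - r) • B) (V (uh r + a r, vh r + b r)))

open Set
open scoped Interval

section ExpSemigroup

variable {𝔸 : Type*} [NormedRing 𝔸] [NormedAlgebra ℝ 𝔸] [CompleteSpace 𝔸]

theorem NormedSpace.exp_add_smul (x : 𝔸) (s t : ℝ) :
    exp ((s + t) • x) = exp (s • x) * exp (t • x) := by
  have hball : ∀ y : 𝔸, y ∈ Metric.eball 0 (expSeries ℝ 𝔸).radius := fun y =>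
    (expSeries_radius_eq_top ℝ 𝔸).symm ▸ edist_lt_top _ _
  rw [add_smul]
  exact exp_add_of_commute_of_mem_ball (((Commute.refl x).smul_left s).smul_right t)
    (hball _) (hball _)

theorem NormedSpace.continuous_exp_smul (x : 𝔸) : Continuous fun t : ℝ => exp (t • x) :=
  continuous_iff_continuousAt.2 fun t => (hasDerivAt_exp_smul_const x t).continuousAt

end ExpSemigroup

theorem lipschitzWith_of_norm_sub_le_add {E F G : Type*} [SeminormedAddCommGroup E]
    [SeminormedAddCommGroup F] [SeminormedAddCommGroup G] {f : E × F → G} {L : ℝ}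
    (hf : ∀ x₁ y₁ x₂ y₂, ‖f (x₁, y₁) - f (x₂, y₂)‖ ≤ L * (‖x₁ - x₂‖ + ‖y₁ - y₂‖)) :
    LipschitzWith (2 * L.toNNReal) f := by
  refine LipschitzWith.of_dist_le_mul fun p q => ?_
  have hsum : ‖p.1 - q.1‖ + ‖p.2 - q.2‖ ≤ 2 * dist p q := by
    rw [dist_eq_norm, two_mul]
    exact add_le_add (norm_fst_le (p - q)) (norm_snd_le (p - q))
  calc dist (f p) (f q) ≤ L * (‖p.1 - q.1‖ + ‖p.2 - q.2‖) := by
        rw [dist_eq_norm]; exact hf p.1 p.2 q.1 q.2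
    _ ≤ max L 0 * (2 * dist p q) :=
        mul_le_mul (le_max_left _ _) hsum (by positivity) (le_max_right _ _)
    _ = ↑(2 * L.toNNReal) * dist p q := by push_cast [Real.coe_toNNReal']; ring

theorem IntervalIntegrable.of_norm_le {E : Type*} [NormedAddCommGroup E] {f : ℝ → E} {s : Set ℝ}
    (hf : AEStronglyMeasurable f (volume.restrict s)) {M : ℝ} (hM : ∀ r, ‖f r‖ ≤ M) {x y : ℝ}
    (hxy : Ι x y ⊆ s) : IntervalIntegrable f volume x y :=
  intervalIntegrable_const.mono_fun' (hf.mono_measure (Measure.restrict_mono hxy le_rfl))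
    (ae_of_all _ hM)

section Integrals

variable {E : Type*} [NormedAddCommGroup E] [NormedSpace ℝ E]

theorem IntervalIntegrable.continuous_clm_apply {g : ℝ → E} {x y : ℝ}
    (hg : IntervalIntegrable g volume x y) {Φ : ℝ → E →L[ℝ] E} (hΦ : Continuous Φ) :
    IntervalIntegrable (fun r => Φ r (g r)) volume x y :=
  letI : IsBoundedSMul (E →L[ℝ] E) E := .of_norm_smul_le fun f v => f.le_opNorm v
  hg.continuousOn_smul hΦ.continuousOn

theorem setIntegral_Iic_comp_add_right (f : ℝ → E) (t s : ℝ) :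
    ∫ r in Iic t, f (r + s) = ∫ r in Iic (t + s), f r := by
  have h := (measurableEmbedding_addRight s).setIntegral_map (μ := volume) f (Iic (t + s))
  rw [map_add_right_eq_self, preimage_add_const_Iic, add_sub_cancel_right] at h
  exact h.symm

end Integrals

theorem exists_exp_mul_comp_add_right_le {c K s : ℝ} {f : ℝ → ℝ}
    (hK : ∀ t ≤ 0, Real.exp (c * t) * f t ≤ K) (hs : s ≤ 0) :
    ∃ K' : ℝ, ∀ t ≤ 0, Real.exp (c * t) * f (t + s) ≤ K' := by
  refine ⟨Real.exp (-(c * s)) * K, fun t ht => ?_⟩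
  calc Real.exp (c * t) * f (t + s)
        = Real.exp (-(c * s)) * (Real.exp (c * (t + s)) * f (t + s)) := by
          rw [← mul_assoc, ← Real.exp_add]; ring_nf
    _ ≤ Real.exp (-(c * s)) * K := by gcongr; exact hK _ (by linarith)

theorem variation_of_constants_comp_add_right {E : Type*} [NormedAddCommGroup E]
    [NormedSpace ℝ E] [CompleteSpace E] (B : E →L[ℝ] E) {g v : ℝ → E} {w : E}
    (hv : ∀ t ≤ 0, v t = NormedSpace.exp (t • B) w -
      ∫ r in t..0, NormedSpace.exp ((t - r) • B) (g r))
    {s t : ℝ} (hs : s ≤ 0) (ht : t ≤ 0) (hg : IntervalIntegrable g volume (t + s) 0) :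
    v (t + s) = NormedSpace.exp (t • B) (v s) -
      ∫ r in t..0, NormedSpace.exp ((t - r) • B) (g (r + s)) := by
  have hkernel : ∀ (c : ℝ) {x y : ℝ}, IntervalIntegrable g volume x y → IntervalIntegrable
      (fun r => NormedSpace.exp ((c - r) • B) (g r)) volume x y := fun c _ _ h =>
    h.continuous_clm_apply ((NormedSpace.continuous_exp_smul B).comp (continuous_sub_left c))
  have hs_mem : s ∈ [[t + s, 0]] := mem_uIcc_of_le (by linarith) hs
  have hint_left := hkernel (t + s) (hg.mono_set (uIcc_subset_uIcc_left hs_mem))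
  have hint_right := hkernel (t + s) (hg.mono_set (uIcc_subset_uIcc_right hs_mem))
  have hint_from_s := hkernel s (hg.mono_set (uIcc_subset_uIcc_right hs_mem))
  have hsemigroup : ∀ (p q : ℝ) (x : E), NormedSpace.exp (p • B) (NormedSpace.exp (q • B) x) =
      NormedSpace.exp ((p + q) • B) x := fun p q x =>
    (congrArg (fun T => T x) (NormedSpace.exp_add_smul B p q)).symm
  have hshift : ∫ r in t..0, NormedSpace.exp ((t - r) • B) (g (r + s)) =
      ∫ r in t + s..s, NormedSpace.exp ((t + s - r) • B) (g r) := by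
    simpa only [zero_add, add_sub_add_right_eq_sub] using
      intervalIntegral.integral_comp_add_right (a := t) (b := 0)
        (fun r => NormedSpace.exp ((t + s - r) • B) (g r)) s
  rw [hshift, hv (t + s) (by linarith), hv s hs, map_sub, hsemigroup,
    ← ContinuousLinearMap.intervalIntegral_comp_comm _ hint_from_s]
  simp_rw [hsemigroup t, ← add_sub_assoc]
  rw [← intervalIntegral.integral_add_adjacent_intervals hint_left hint_right]
  abel

theorem star_solution_shift_invariance_general (n m : ℕ)
    (L MV μ ε : ℝ)
    (A : EuclideanSpace ℝ (Fin n) →L[ℝ] EuclideanSpace ℝ (Fin n))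
    (B : EuclideanSpace ℝ (Fin m) →L[ℝ] EuclideanSpace ℝ (Fin m))
    (U : EuclideanSpace ℝ (Fin n) × EuclideanSpace ℝ (Fin m) → EuclideanSpace ℝ (Fin n))
    (V : EuclideanSpace ℝ (Fin n) × EuclideanSpace ℝ (Fin m) → EuclideanSpace ℝ (Fin m))
    -- (H3)
    (hVL : ∀ x₁ y₁ x₂ y₂, ‖V (x₁, y₁) - V (x₂, y₂)‖ ≤ L * (‖x₁ - x₂‖ + ‖y₁ - y₂‖))
    -- (H5)
    (hMV : ∀ z, ‖V z‖ ≤ MV)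
    -- input paths
    (a : ℝ → EuclideanSpace ℝ (Fin n)) (b : ℝ → EuclideanSpace ℝ (Fin m))
    (ha : Measurable a) (hb : Measurable b)
    -- anchor and a solution of (★)
    (w : EuclideanSpace ℝ (Fin m))
    (uh : ℝ → EuclideanSpace ℝ (Fin n)) (vh : ℝ → EuclideanSpace ℝ (Fin m))
    (hsol : IsStarSolution n m ε μ A B U V a b w uh vh) :
    ∀ s : ℝ, s ≤ 0 →
      IsStarSolution n m ε μ A B U V
        (fun r => a (r + s)) (fun r => b (r + s)) (vh s)
        (fun t => uh (t + s)) (fun t => vh (t + s)) := by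
  obtain ⟨hu_cont, hv_cont, ⟨K, hK⟩, hu_eq, hv_eq⟩ := hsol
  intro s hs
  have hshift : MapsTo (· + s) (Iic 0) (Iic 0) := fun t (ht : t ≤ 0) =>
    show t + s ≤ 0 by linarith
  have hV_meas : AEStronglyMeasurable (fun r => V (uh r + a r, vh r + b r))
      (volume.restrict (Iic 0)) :=
    (lipschitzWith_of_norm_sub_le_add hVL).continuous.comp_aestronglyMeasurable
      (((hu_cont.aestronglyMeasurable measurableSet_Iic).add ha.aestronglyMeasurable).prodMk
        ((hv_cont.aestronglyMeasurable measurableSet_Iic).add hb.aestronglyMeasurable))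
  refine ⟨hu_cont.comp (continuous_add_const s).continuousOn hshift,
    hv_cont.comp (continuous_add_const s).continuousOn hshift,
    exists_exp_mul_comp_add_right_le hK hs, fun t ht => ?_, fun t ht => ?_⟩
  · dsimp only
    rw [hu_eq (t + s) (hshift ht), ← setIntegral_Iic_comp_add_right]
    simp only [add_sub_add_right_eq_sub]
  · refine variation_of_constants_comp_add_right B hv_eq hs ht
      (IntervalIntegrable.of_norm_le hV_meas (fun r => hMV _) ?_)
    rw [uIoc_of_le (hshift ht)]
    exact Ioc_subset_Iic_self

/-- pathwise cocycle property (3.5). Under (H1)–(H3) and (H5), with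
`ε γ₂ < μ < γ₁`, if `(û, v̂) ∈ C⁻_{μ/ε}` solves the integral system (★) with input paths
`a, b` and anchor `w`, then for every `s ≤ 0` the shifted functions `t ↦ (û_{t+s}, v̂_{t+s})`
belong to `C⁻_{μ/ε}` and solve (★) with the shifted input paths `a(·+s), b(·+s)` and
anchor `v̂_s`. -/
theorem star_solution_shift_invariance (n m : ℕ)
    (γ₁ γ₂ γ₃ L MU MV μ ε : ℝ)
    (A : EuclideanSpace ℝ (Fin n) →L[ℝ] EuclideanSpace ℝ (Fin n))
    (B : EuclideanSpace ℝ (Fin m) →L[ℝ] EuclideanSpace ℝ (Fin m))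
    (U : EuclideanSpace ℝ (Fin n) × EuclideanSpace ℝ (Fin m) → EuclideanSpace ℝ (Fin n))
    (V : EuclideanSpace ℝ (Fin n) × EuclideanSpace ℝ (Fin m) → EuclideanSpace ℝ (Fin m))
    -- (H1)
    (hγ₁ : 0 < γ₁)
    (hA : ∀ x : EuclideanSpace ℝ (Fin n), ⟪A x, x⟫ ≤ -γ₁ * ‖x‖ ^ 2)
    -- (H2)
    (hγ₂ : 0 < γ₂) (hγ₃ : 0 < γ₃)
    (hB₁ : ∀ t : ℝ, t ≤ 0 → ‖NormedSpace.exp (t • B)‖ ≤ Real.exp (-γ₂ * t))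
    (hB₂ : ∀ t : ℝ, 0 < t → ‖NormedSpace.exp (t • B)‖ ≤ Real.exp (-γ₃ * t))
    -- (H3)
    (hL : 0 < L)
    (hUL : ∀ x₁ y₁ x₂ y₂, ‖U (x₁, y₁) - U (x₂, y₂)‖ ≤ L * (‖x₁ - x₂‖ + ‖y₁ - y₂‖))
    (hVL : ∀ x₁ y₁ x₂ y₂, ‖V (x₁, y₁) - V (x₂, y₂)‖ ≤ L * (‖x₁ - x₂‖ + ‖y₁ - y₂‖))
    -- (H5)
    (hMU : ∀ z, ‖U z‖ ≤ MU) (hMV : ∀ z, ‖V z‖ ≤ MV)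
    -- scales: ε γ₂ < μ < γ₁
    (hμ : 0 < μ) (hε : 0 < ε) (hεμ : ε * γ₂ < μ) (hμγ₁ : μ < γ₁)
    -- input paths
    (a : ℝ → EuclideanSpace ℝ (Fin n)) (b : ℝ → EuclideanSpace ℝ (Fin m))
    (ha : Measurable a) (hb : Measurable b)
    -- anchor and a solution of (★)
    (w : EuclideanSpace ℝ (Fin m))
    (uh : ℝ → EuclideanSpace ℝ (Fin n)) (vh : ℝ → EuclideanSpace ℝ (Fin m))
    (hsol : IsStarSolution n m ε μ A B U V a b w uh vh) :
    ∀ s : ℝ, s ≤ 0 →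
      IsStarSolution n m ε μ A B U V
        (fun r => a (r + s)) (fun r => b (r + s)) (vh s)
        (fun t => uh (t + s)) (fun t => vh (t + s)) :=
  star_solution_shift_invariance_general n m L MV μ ε A B U V hVL hMV a b ha hb w uh vh hsol
end
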